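/- Lemma 1 (weighted form): Let M ≤ N ≤ K, let p be a probability vector on Fin N, q a probability vector on Fin M, and w a weight function on mappings σ : Fin N → Fin N with w σ ≥ 0 and ∑_σ w σ = 1. For each σ : Fin N → Fin N let ext σ : Fin K → Fin K be the mapping that acts as σ on the first N coordinates (i.e., ext σ i = σ i, viewed in Fin K, whenever i < N) and fixes all coordinates i with i ≥ N. Then ∑_σ w σ · EMD_K(pad^{N,K} p, (ext σ)_*(pad^{M,K} q)) = ∑_σ w σ · EMD_N(p, σ_*(pad^{M,N} q)); i.e., EEMD is unchanged when both distributions are zero-padded into a larger simplex and the mappings of the extra dimensions fix those dimensions. -/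

import Mathlib

open Finset

/-- A probability vector on `Fin n`. -/
def IsProbVec {n : ℕ} (p : Fin n → ℝ) : Prop :=
  (∀ i, 0 ≤ p i) ∧ ∑ i, p i = 1

/-- A coupling between `p` and `q` on `Fin n`. -/
def IsCoupling {n : ℕ} (p q : Fin n → ℝ) (γ : Fin n → Fin n → ℝ) : Prop :=
  (∀ i j, 0 ≤ γ i j) ∧ (∀ i, ∑ j, γ i j = p i) ∧ (∀ j, ∑ i, γ i j = q j)

/-- Unit-cost Earth Mover's Distance: infimum of the off-diagonal mass over all couplings. -/
noncomputable def EMD {n : ℕ} (p q : Fin n → ℝ) : ℝ :=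
  sInf { c : ℝ | ∃ γ : Fin n → Fin n → ℝ, IsCoupling p q γ ∧
    c = ∑ i, ∑ j, if i ≠ j then γ i j else 0 }

/-- Zero-padding of a vector on `Fin M` into `Fin N`. -/
def pad (M N : ℕ) (q : Fin M → ℝ) : Fin N → ℝ :=
  fun i => if hi : (i : ℕ) < M then q ⟨i, hi⟩ else 0

/-- Pushforward of a vector `r` on `Fin n` along a mapping `σ : Fin n → Fin n`. -/
def pushforward {n : ℕ} (σ : Fin n → Fin n) (r : Fin n → ℝ) : Fin n → ℝ :=
  fun j => ∑ i ∈ Finset.univ.filter (fun i => σ i = j), r i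

/-- Extended Earth Mover's Distance, with weight `w` over mappings `σ ` of the padded simplex. -/
noncomputable def EEMD {M N : ℕ} (p : Fin N → ℝ) (q : Fin M → ℝ)
    (w : (Fin N → Fin N) → ℝ) : ℝ :=
  ∑ σ : Fin N → Fin N, w σ * EMD p (pushforward σ (pad M N q))

/-- Extension of a mapping `σ : Fin N → Fin N` to `Fin K` (for `N ≤ K`), acting as `σ`
on the first `N` coordinates and fixing the rest. -/
def extMap {N K : ℕ} (h : N ≤ K) (σ : Fin N → Fin N) : Fin K → Fin K :=
  fun i => if hi : (i : ℕ) < N then ⟨σ ⟨i, hi⟩, lt_of_lt_of_le (σ ⟨i, hi⟩).isLt h⟩ else i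

lemma sum_extend {N K : ℕ} (h : N ≤ K) (f : Fin K → ℝ)
    (hf : ∀ i : Fin K, N ≤ (i : ℕ) → f i = 0) :
    ∑ i : Fin K, f i = ∑ i : Fin N, f (Fin.castLE h i) := by
  classical
  set g : ℕ → ℝ := fun n => if hn : n < K then f ⟨n, hn⟩ else 0 with hg
  have e1 : ∑ i : Fin K, f i = ∑ n ∈ Finset.range K, g n := by
    rw [← Fin.sum_univ_eq_sum_range]
    exact Finset.sum_congr rfl (fun i _ => by simp [hg, i.isLt])
  have e2 : ∑ i : Fin N, f (Fin.castLE h i) = ∑ n ∈ Finset.range N, g n := by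
    rw [← Fin.sum_univ_eq_sum_range]
    refine Finset.sum_congr rfl (fun i _ => ?_)
    have : (i : ℕ) < K := lt_of_lt_of_le i.isLt h
    simp [hg, this]
    rfl
  rw [e1, e2]
  refine (Finset.sum_subset (Finset.range_subset_range.2 h) ?_).symm
  intro n hn hn'
  simp only [Finset.mem_range] at hn hn'
  simp [hg, hn, hf ⟨n, hn⟩ (le_of_not_gt hn')]

lemma sum_restrict {N K : ℕ} (h : N ≤ K) (f : Fin N → ℝ) :
    ∑ j : Fin K, (if hj : (j : ℕ) < N then f ⟨j, hj⟩ else 0) = ∑ j, f j := by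
  rw [sum_extend h _ (fun j hj => dif_neg (not_lt.2 hj))]
  exact Finset.sum_congr rfl (fun j _ => by simp)

lemma pushforward_ext {M N K : ℕ} (hMN : M ≤ N) (hNK : N ≤ K) (σ : Fin N → Fin N)
    (q : Fin M → ℝ) :
    pushforward (extMap hNK σ) (pad M K q) = pad N K (pushforward σ (pad M N q)) := by
  funext j
  unfold pushforward pad extMap
  rw [Finset.sum_filter]
  by_cases hj : (j : ℕ) < N
  · rw [dif_pos hj]
    simp only [Finset.sum_filter]
    rw [sum_extend hNK (fun i => if (if hi : (i : ℕ) < N then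
        (⟨σ ⟨i, hi⟩, lt_of_lt_of_le (σ ⟨i, hi⟩).isLt hNK⟩ : Fin K) else i) = j then
        (if hi : (i : ℕ) < M then q ⟨i, hi⟩ else 0) else 0)]
    · refine Finset.sum_congr rfl (fun i _ => ?_)
      have hi : ((Fin.castLE hNK i : Fin K) : ℕ) < N := i.isLt
      simp only [dif_pos hi]
      have hcond : ((⟨σ ⟨(Fin.castLE hNK i : Fin K), hi⟩,
          lt_of_lt_of_le (σ ⟨(Fin.castLE hNK i : Fin K), hi⟩).isLt hNK⟩ : Fin K) = j)
          ↔ (σ i = ⟨j, hj⟩) := by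
        constructor
        · intro hh
          have := congrArg Fin.val hh
          simp only at this
          apply Fin.ext
          simpa using this
        · intro hh
          apply Fin.ext
          simpa using congrArg Fin.val hh
      by_cases hc : σ i = ⟨j, hj⟩
      · rw [if_pos (hcond.2 hc), if_pos hc]
        rfl
      · rw [if_neg (fun hh => hc (hcond.1 hh)), if_neg hc]
    · intro i hi
      rw [dif_neg (not_lt.2 hi)]
      by_cases hc : i = j
      · rw [if_pos hc, dif_neg (not_lt.2 (le_trans hMN (hc ▸ hi)))]
      · rw [if_neg hc]
  · rw [dif_neg hj]
    refine Finset.sum_eq_zero (fun i _ => ?_)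
    by_cases hi : (i : ℕ) < N
    · rw [dif_pos hi]
      have : ¬ ((⟨σ ⟨i, hi⟩, lt_of_lt_of_le (σ ⟨i, hi⟩).isLt hNK⟩ : Fin K) = j) := by
        intro hh
        exact hj (hh ▸ (σ ⟨i, hi⟩).isLt)
      rw [if_neg this]
    · rw [dif_neg hi]
      by_cases hc : i = j
      · rw [if_pos hc, dif_neg (not_lt.2 (le_trans hMN (le_of_not_gt (hc ▸ hi))))]
      · rw [if_neg hc]

lemma emd_pad {N K : ℕ} (hNK : N ≤ K) (p q : Fin N → ℝ) :
    EMD (pad N K p) (pad N K q) = EMD p q := by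
  unfold EMD
  congr 1
  ext c
  simp only [Set.mem_setOf_eq]
  constructor
  · rintro ⟨γ, ⟨hpos, hrow, hcol⟩, rfl⟩
    -- entries outside the top-left N×N block vanish
    have hz_row : ∀ i j : Fin K, N ≤ (i : ℕ) → γ i j = 0 := by
      intro i j hi
      have hsum : ∑ j, γ i j = 0 := by
        rw [hrow i]; unfold pad; rw [dif_neg (not_lt.2 hi)]
      exact (Finset.sum_eq_zero_iff_of_nonneg (fun j _ => hpos i j)).1 hsum j (Finset.mem_univ j)
    have hz_col : ∀ i j : Fin K, N ≤ (j : ℕ) → γ i j = 0 := by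
      intro i j hj
      have hsum : ∑ i, γ i j = 0 := by
        rw [hcol j]; unfold pad; rw [dif_neg (not_lt.2 hj)]
      exact (Finset.sum_eq_zero_iff_of_nonneg (fun i _ => hpos i j)).1 hsum i (Finset.mem_univ i)
    refine ⟨fun i j => γ (Fin.castLE hNK i) (Fin.castLE hNK j), ⟨fun i j => hpos _ _, ?_, ?_⟩, ?_⟩
    · intro i
      rw [← sum_extend hNK (fun j => γ (Fin.castLE hNK i) j)
        (fun j hj => hz_col _ _ hj), hrow]
      simp [pad]
    · intro j
      rw [← sum_extend hNK (fun i => γ i (Fin.castLE hNK j))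
        (fun i hi => hz_row _ _ hi), hcol]
      simp [pad]
    · rw [sum_extend hNK (fun i => ∑ j, if i ≠ j then γ i j else 0) ?_]
      · refine Finset.sum_congr rfl (fun i _ => ?_)
        rw [sum_extend hNK (fun j => if Fin.castLE hNK i ≠ j then γ (Fin.castLE hNK i) j else 0)
          ?_]
        · refine Finset.sum_congr rfl (fun j _ => ?_)
          have : (Fin.castLE hNK i ≠ Fin.castLE hNK j) ↔ (i ≠ j) := by
            constructor
            · intro hh he; exact hh (he ▸ rfl)
            · intro hh he; exact hh (Fin.castLE_injective hNK he)
          by_cases hc : i = j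
          · rw [if_neg (fun hh => hh (hc ▸ rfl)), if_neg (fun hh => hh hc)]
          · rw [if_pos (this.2 hc), if_pos hc]
        · intro j hj
          by_cases hc : Fin.castLE hNK i ≠ j
          · rw [if_pos hc, hz_col _ _ hj]
          · rw [if_neg hc]
      · intro i hi
        refine Finset.sum_eq_zero (fun j _ => ?_)
        by_cases hc : i ≠ j
        · rw [if_pos hc, hz_row _ _ hi]
        · rw [if_neg hc]
  · rintro ⟨γ, ⟨hpos, hrow, hcol⟩, rfl⟩
    classical
    refine ⟨fun i j => if hi : (i : ℕ) < N then if hj : (j : ℕ) < N then γ ⟨i, hi⟩ ⟨j, hj⟩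
      else 0 else 0, ⟨?_, ?_, ?_⟩, ?_⟩
    · intro i j
      dsimp only
      by_cases hi : (i : ℕ) < N
      · by_cases hj : (j : ℕ) < N
        · rw [dif_pos hi, dif_pos hj]; exact hpos _ _
        · rw [dif_pos hi, dif_neg hj]
      · rw [dif_neg hi]
    · intro i
      dsimp only
      by_cases hi : (i : ℕ) < N
      · simp only [dif_pos hi]
        refine (sum_restrict hNK (fun x => γ ⟨(i : ℕ), hi⟩ x)).trans ?_
        rw [hrow]
        simp [pad, hi]
      · rw [Finset.sum_eq_zero (fun j _ => by rw [dif_neg hi])]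
        simp [pad, hi]
    · intro j
      dsimp only
      by_cases hj : (j : ℕ) < N
      · have : ∀ i : Fin K, (if hi : (i : ℕ) < N then if hj' : (j : ℕ) < N then
            γ ⟨i, hi⟩ ⟨j, hj'⟩ else 0 else 0)
            = (if hi : (i : ℕ) < N then γ ⟨i, hi⟩ ⟨(j : ℕ), hj⟩ else 0) := by
          intro i
          by_cases hi : (i : ℕ) < N
          · rw [dif_pos hi, dif_pos hi, dif_pos hj]
          · rw [dif_neg hi, dif_neg hi]
        rw [Finset.sum_congr rfl (fun i _ => this i)]
        refine (sum_restrict hNK (fun x => γ x ⟨(j : ℕ), hj⟩)).trans ?_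
        rw [hcol]
        simp [pad, hj]
      · rw [Finset.sum_eq_zero (fun i _ => ?_)]
        · simp [pad, hj]
        · by_cases hi : (i : ℕ) < N
          · rw [dif_pos hi, dif_neg hj]
          · rw [dif_neg hi]
    · rw [sum_extend hNK (fun i => ∑ j : Fin K, if i ≠ j then (if hi : (i : ℕ) < N then
        if hj : (j : ℕ) < N then γ ⟨i, hi⟩ ⟨j, hj⟩ else 0 else 0) else 0) ?_]
      · refine Finset.sum_congr rfl (fun i _ => ?_)
        rw [sum_extend hNK _ ?_]
        · refine Finset.sum_congr rfl (fun j _ => ?_)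
          by_cases hc : i = j
          · subst hc
            rw [if_neg (by simp), if_neg (by simp)]
          · have hc' : Fin.castLE hNK i ≠ Fin.castLE hNK j :=
              fun he => hc (Fin.castLE_injective hNK he)
            rw [if_pos hc', if_pos hc]
            simp
        · intro j hj
          by_cases hc : Fin.castLE hNK i ≠ j
          · rw [if_pos hc]
            simp [not_lt.2 hj]
          · rw [if_neg hc]
      · intro i hi
        refine Finset.sum_eq_zero (fun j _ => ?_)
        by_cases hc : i ≠ j
        · rw [if_pos hc, dif_neg (not_lt.2 hi)]
        · rw [if_neg hc]

/-- Lemma 1, weighted form: EEMD is unchanged under zero-padding both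
distributions, with the mappings extended to fix the extra dimensions. -/
theorem eemd_pad_invariant (M N K : ℕ) (hMN : M ≤ N) (hNK : N ≤ K)
    (p : Fin N → ℝ) (q : Fin M → ℝ) (hp : IsProbVec p) (hq : IsProbVec q)
    (w : (Fin N → Fin N) → ℝ) (hw : ∀ σ, 0 ≤ w σ) (hw1 : ∑ σ, w σ = 1) :
    ∑ σ : Fin N → Fin N,
        w σ * EMD (pad N K p) (pushforward (extMap hNK σ) (pad M K q)) =
      ∑ σ : Fin N → Fin N, w σ * EMD p (pushforward σ (pad M N q)) := by
  refine Finset.sum_congr rfl (fun σ _ => ?_)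
  rw [pushforward_ext hMN hNK σ q, emd_pad hNK]
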